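/- Let G : ℕ → ℂ and let 𝒦 be the integral operator 𝒦g(x) = Σ_{y∈T} q^{−ℓ(x)/2} G(d(x,y)) q^{−ℓ(y)/2} g(y) μ(y), defined for finitely supported g. Then for every finitely supported f : T → ℂ and every x ∈ T, 𝒦(∇_ε* f)(x) = Σ_{n≥0} q^{n/2} (G(n) − G(n+2)) · ∇_ε* f(𝔭ⁿ(x)) (all sums involved have finitely many nonzero terms). -/

import Mathlib

open MeasureTheory ENNReal Set Function
open scoped NNReal ENNReal Classical

noncomputable section

/-- A homogeneous tree of degree `q+1` with a distinguished end (mythical ancestor),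
encoded through its graph distance `dist`, horocyclic level function `level`,
and predecessor map `pred`. -/
structure FlowTree (q : ℕ) where
  V : Type
  countableV : Countable V
  dist : V → V → ℕ
  level : V → ℤ
  pred : V → V
  dist_self : ∀ x, dist x x = 0
  eq_of_dist_eq_zero : ∀ x y, dist x y = 0 → x = y
  dist_comm : ∀ x y, dist x y = dist y x
  dist_triangle : ∀ x y z, dist x z ≤ dist x y + dist y z
  level_pred : ∀ x, level (pred x) = level x + 1
  succ_finite : ∀ x, Set.Finite {y | pred y = x}
  succ_card : ∀ x, Nat.card {y // pred y = x} = q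
  dist_le : ∀ (x y : V) (n m : ℕ), pred^[n] x = pred^[m] y → dist x y ≤ n + m
  dist_spec : ∀ x y, ∃ n m : ℕ, pred^[n] x = pred^[m] y ∧ n + m = dist x y

namespace FlowTree

variable {q : ℕ} (S : FlowTree q)

/-- The canonical flow measure weight `μ(x) = q^{ℓ(x)}`, as an extended nonnegative real. -/
def w (x : S.V) : ℝ≥0∞ := (q : ℝ≥0∞) ^ ((S.level x : ℤ) : ℝ)

/-- The canonical flow measure weight `μ(x) = q^{ℓ(x)}`, as a real number. -/
def wR (x : S.V) : ℝ := (q : ℝ) ^ (S.level x)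

/-- The canonical flow measure of a set `E ⊆ T`. -/
def muS (E : Set S.V) : ℝ≥0∞ := ∑' x : E, S.w x

/-- The `L^p(μ)` (quasi)norm, `p ∈ [1,∞]`. -/
def lpNorm (p : ℝ≥0∞) {E : Type*} [NNNorm E] (f : S.V → E) : ℝ≥0∞ :=
  if p = ∞ then ⨆ x, (‖f x‖₊ : ℝ≥0∞)
  else (∑' x, (‖f x‖₊ : ℝ≥0∞) ^ p.toReal * S.w x) ^ (1 / p.toReal)

/-- The weak `L^{1,∞}(μ)` quasinorm `sup_{λ>0} λ · μ({|f| > λ})`. -/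
def wkNorm {E : Type*} [NNNorm E] (f : S.V → E) : ℝ≥0∞ :=
  ⨆ t : ℝ≥0, (t : ℝ≥0∞) * S.muS {x | t < ‖f x‖₊}

/-- `Σf(x) = f(𝔭(x))`. -/
def sig (f : S.V → ℂ) : S.V → ℂ := fun x => f (S.pred x)

/-- `Σ*f(x) = (1/q) Σ_{y ∈ succ(x)} f(y)`. -/
def sigStar (f : S.V → ℂ) : S.V → ℂ :=
  fun x => (q : ℂ)⁻¹ * ∑' y : {y | S.pred y = x}, f y.1

/-- The flow gradient `∇ = id − Σ`. -/
def grad (f : S.V → ℂ) : S.V → ℂ := fun x => f x - f (S.pred x)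

/-- `∇* = id − Σ*`. -/
def gradStar (f : S.V → ℂ) : S.V → ℂ := fun x => f x - S.sigStar f x

/-- The modulus of the gradient `Df(x) = Σ_{y ∼ x} |f(x) − f(y)|`. -/
def Dmod (f : S.V → ℂ) : S.V → ℝ :=
  fun x => ∑' y : {y | S.dist x y = 1}, ‖f x - f y.1‖

/-- `Σ̃_n = Σ^n` for `n ≥ 0` and `(Σ*)^{−n}` for `n < 0`. -/
def sigTilde (n : ℤ) (f : S.V → ℂ) : S.V → ℂ :=
  if 0 ≤ n then (S.sig)^[n.toNat] f else (S.sigStar)^[(-n).toNat] f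

/-- `Σ*` acting on real-valued functions. -/
def sigStarR (f : S.V → ℝ) : S.V → ℝ :=
  fun x => (q : ℝ)⁻¹ * ∑' y : {y | S.pred y = x}, f y.1

/-- The flow Laplacian `𝓛 = id − (Σ + Σ*)/2`, acting pointwise on real functions. -/
def lapR (f : S.V → ℝ) : S.V → ℝ :=
  fun x => f x - (f (S.pred x) + S.sigStarR f x) / 2

/-- `δ_y/μ(y)`, the normalized delta at `y`. -/
def deltaMu (y : S.V) : S.V → ℝ := fun z => if z = y then (S.wR y)⁻¹ else 0

/-- The heat kernel `H_t(x,y)` of the flow Laplacian, i.e. `(e^{−t𝓛} (δ_y/μ(y)))(x)`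
computed via the exponential power series of the bounded operator `𝓛`. -/
def Hker (t : ℝ) (x y : S.V) : ℝ :=
  ∑' n : ℕ, ((-t) ^ n / (n.factorial : ℝ)) * ((S.lapR)^[n] (S.deltaMu y)) x

/-- The integral kernel `K(x,y)` of `𝓛^{−1/2}`, by subordination. -/
def Kker (x y : S.V) : ℝ :=
  (Real.sqrt Real.pi)⁻¹ * ∫ t in Set.Ioi (0 : ℝ), S.Hker t x y * t ^ (-(1 : ℝ)/2)

/-- The Riesz transform `𝓡 = ∇𝓛^{−1/2}`, defined on finitely supported functions. -/
def riesz (f : S.V → ℂ) : S.V → ℂ :=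
  fun x => ∑' y, ((S.Kker x y - S.Kker (S.pred x) y : ℝ) : ℂ) * f y * (S.wR y : ℂ)

/-- The integral operator with almost-radial kernel `q^{−ℓ(x)/2} G(d(x,y)) q^{−ℓ(y)/2}`. -/
def kernelOp (G : ℕ → ℂ) (f : S.V → ℂ) : S.V → ℂ :=
  fun x => ∑' y, (((q : ℝ) ^ (-((S.level x : ℤ) : ℝ)/2) * (q : ℝ) ^ (-((S.level y : ℤ) : ℝ)/2) : ℝ) : ℂ)
    * G (S.dist x y) * f y * (S.wR y : ℂ)

/-- The ε-horizontal gradient `∇_ε f(x) = (1/q) Σ_{y ∈ succ(x)} ε(y) f(y)`. -/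
def hgrad (ε f : S.V → ℂ) : S.V → ℂ :=
  fun x => (q : ℂ)⁻¹ * ∑' y : {y | S.pred y = x}, ε y.1 * f y.1

/-- The adjoint ε-horizontal gradient `∇_ε* f(x) = conj(ε(x)) f(𝔭(x))`. -/
def hgradStar (ε f : S.V → ℂ) : S.V → ℂ :=
  fun x => (starRingEnd ℂ) (ε x) * f (S.pred x)

/-- `‖ε‖_∞`. -/
def epsSup (ε : S.V → ℂ) : ℝ≥0∞ := ⨆ x, (‖ε x‖₊ : ℝ≥0∞)

/-- The `L²(μ)` inner product. -/
def inner2 (f g : S.V → ℂ) : ℂ := ∑' x, f x * (starRingEnd ℂ) (g x) * (S.wR x : ℂ)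

/-- `y ≤ x` iff `d(x,y) = ℓ(x) − ℓ(y)`. -/
def le' (y x : S.V) : Prop := (S.dist x y : ℤ) = S.level x - S.level y

/-- Admissible trapezoids of `(T,μ)`. -/
def IsAdmissibleTrapezoid (F : Set S.V) : Prop :=
  (∃ x, F = {x}) ∨
  ∃ (x₀ : S.V) (h1 h2 : ℕ), 0 < h1 ∧ 2 * h1 ≤ h2 ∧ h2 ≤ 12 * h1 ∧
    F = {x | S.le' x x₀ ∧ S.level x₀ - (h2 : ℤ) < S.level x ∧ S.level x ≤ S.level x₀ - (h1 : ℤ)}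

/-- `(1,∞)`-atoms of `(T,μ)`. -/
def IsOneInftyAtom (a : S.V → ℂ) : Prop :=
  ∃ F : Set S.V, S.IsAdmissibleTrapezoid F ∧ Function.support a ⊆ F ∧
    (∑' x, a x * (S.wR x : ℂ)) = 0 ∧ ∀ x, (‖a x‖₊ : ℝ≥0∞) ≤ (S.muS F)⁻¹

end FlowTree

namespace ZRiesz

/-- The discrete Laplacian on `ℤ`. -/
def deltaZ (F : ℤ → ℝ) : ℤ → ℝ := fun n => F n - (F (n + 1) + F (n - 1)) / 2

/-- The heat kernel `h_t^ℤ = e^{−tΔ_ℤ} δ_0` on `ℤ`, via the exponential power series. -/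
def heatZ (t : ℝ) (n : ℤ) : ℝ :=
  ∑' k : ℕ, ((-t) ^ k / (k.factorial : ℝ)) *
    (deltaZ^[k] (fun m => if m = 0 then (1 : ℝ) else 0)) n

/-- Kernel of the Riesz transform on `ℤ`: `k_ℤ(n) = π^{−1/2} ∫₀^∞ (∇_ℤ h_t^ℤ)(n) t^{−1/2} dt`. -/
def kZ (n : ℤ) : ℝ :=
  (Real.sqrt Real.pi)⁻¹ * ∫ t in Set.Ioi (0 : ℝ), (heatZ t n - heatZ t (n + 1)) * t ^ (-(1 : ℝ)/2)

/-- Kernel of the skew-symmetric part: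
`k̃_ℤ(n) = π^{−1/2} ∫₀^∞ (∇̃_ℤ h_t^ℤ)(n) t^{−1/2} dt`. -/
def ktZ (n : ℤ) : ℝ :=
  (Real.sqrt Real.pi)⁻¹ *
    ∫ t in Set.Ioi (0 : ℝ), (heatZ t (n - 1) - heatZ t (n + 1)) * t ^ (-(1 : ℝ)/2)

/-- The closed formula `k̃_ℤ(m) = (2√2/π) m/(m² − 1/4)`. -/
def ktZc (m : ℤ) : ℝ := (2 * Real.sqrt 2 / Real.pi) * (m : ℝ) / ((m : ℝ) ^ 2 - 1/4)

/-- `G(n) = Σ_{k≥0} q^{−(n+2k)/2} k̃_ℤ(n+2k+1)` (subordination kernel version). -/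
def Gint (q : ℕ) (n : ℕ) : ℝ :=
  ∑' k : ℕ, (q : ℝ) ^ (-(((n : ℝ)) + 2 * (k : ℝ))/2) * ktZ ((n : ℤ) + 2 * (k : ℤ) + 1)

/-- `G(n) = Σ_{k≥0} q^{−(n+2k)/2} k̃_ℤ(n+2k+1)` (closed formula version). -/
def Gc (q : ℕ) (n : ℕ) : ℝ :=
  ∑' k : ℕ, (q : ℝ) ^ (-(((n : ℝ)) + 2 * (k : ℝ))/2) * ktZc ((n : ℤ) + 2 * (k : ℤ) + 1)

/-- The `ℓ^p(ℤ)` norm. -/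
def zlpNorm (p : ℝ≥0∞) (F : ℤ → ℂ) : ℝ≥0∞ :=
  if p = ∞ then ⨆ n, (‖F n‖₊ : ℝ≥0∞)
  else (∑' n : ℤ, (‖F n‖₊ : ℝ≥0∞) ^ p.toReal) ^ (1 / p.toReal)

/-- The `ℓ^{1,∞}(ℕ)` quasinorm. -/
def natWk (F : ℕ → ℂ) : ℝ≥0∞ :=
  ⨆ t : ℝ≥0, (t : ℝ≥0∞) * ∑' (_ : {n : ℕ | t < ‖F n‖₊}), (1 : ℝ≥0∞)

end ZRiesz

/-- The punctured boundary `Ω = ∂T \ {ω_*}` of the tree, together with the measure `ν`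
with `ν(Ω_x) = q^{ℓ(x)}`.  `vert ω n` is the vertex `ω_n` of level `n` on the geodesic
`[ω, ω_*]`. -/
structure FlowTreeBoundary {q : ℕ} (S : FlowTree q) where
  Ω : Type
  mΩ : MeasurableSpace Ω
  ν : @MeasureTheory.Measure Ω mΩ
  vert : Ω → ℤ → S.V
  level_vert : ∀ ω n, S.level (vert ω n) = n
  pred_vert : ∀ ω n, S.pred (vert ω n) = vert ω (n + 1)
  vert_surj : ∀ x : S.V, ∃ ω, vert ω (S.level x) = x
  vert_inj : ∀ ω ω', (∀ n, vert ω n = vert ω' n) → ω = ω'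
  meas_cone : ∀ x : S.V, @MeasurableSet Ω mΩ {ω | vert ω (S.level x) = x}
  nu_cone : ∀ x : S.V, ν {ω | vert ω (S.level x) = x} = (q : ℝ≥0∞) ^ ((S.level x : ℤ) : ℝ)

attribute [instance] FlowTreeBoundary.mΩ

namespace FlowTreeBoundary

variable {q : ℕ} {S : FlowTree q} (B : FlowTreeBoundary S)

/-- The product measure `ν × #` on `Ω × ℤ`. -/
def pm : MeasureTheory.Measure (B.Ω × ℤ) := B.ν.prod MeasureTheory.Measure.count

/-- `Ω_x = {ω : x ∈ [ω, ω_*]}`. -/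
def cone (x : S.V) : Set B.Ω := {ω | B.vert ω (S.level x) = x}

/-- The lifting operator `Φf(ω,n) = f(ω_n)`. -/
def lift (f : S.V → ℂ) : B.Ω × ℤ → ℂ := fun p => f (B.vert p.1 p.2)

/-- The lifting operator on `ℝ≥0∞`-valued functions. -/
def liftNN (f : S.V → ℝ≥0∞) : B.Ω × ℤ → ℝ≥0∞ := fun p => f (B.vert p.1 p.2)

/-- The adjoint `Φ*g(x) = ν(Ω_x)^{−1} ∫_{Ω_x} g(ω, ℓ(x)) dν(ω)`. -/
def liftStar (g : B.Ω × ℤ → ℂ) : S.V → ℂ :=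
  fun x => ((B.ν (B.cone x)).toReal)⁻¹ * ∫ ω in B.cone x, g (ω, S.level x) ∂B.ν

/-- The adjoint `Φ*` on `ℝ≥0∞`-valued functions. -/
def liftStarNN (g : B.Ω × ℤ → ℝ≥0∞) : S.V → ℝ≥0∞ :=
  fun x => (B.ν (B.cone x))⁻¹ * ∫⁻ ω in B.cone x, g (ω, S.level x) ∂B.ν

end FlowTreeBoundary

/-- The weak `L^{1,∞}(μ)` quasinorm with respect to a measure. -/
def wkMeas {α : Type*} [MeasurableSpace α] (μ : MeasureTheory.Measure α) (g : α → ℂ) : ℝ≥0∞ :=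
  ⨆ t : ℝ≥0, (t : ℝ≥0∞) * μ {a | t < ‖g a‖₊}

/-- The weak `L^{1,∞}(μ)` quasinorm for `ℝ≥0∞`-valued functions. -/
def wkMeasNN {α : Type*} [MeasurableSpace α] (μ : MeasureTheory.Measure α) (g : α → ℝ≥0∞) :
    ℝ≥0∞ :=
  ⨆ t : ℝ≥0, (t : ℝ≥0∞) * μ {a | (t : ℝ≥0∞) < g a}

end

/-!
Group the sum over `y` according to `z = 𝔭 y`. For `y ∈ succ z` we have
`∇_ε* f(y) = conj ε(y) · f(z)`, the factor `q^{-ℓ(y)/2} μ(y)` depends only on `z`, and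
`d(x, y) = d(x, z) + 1` unless `y` lies on the ray from `x` towards `ω*`, i.e. `y = 𝔭ⁿ x`,
where `d(x, y) = n` instead of `n + 2`. Since `ε` sums to zero over every `succ z`, the part
depending only on `z` cancels, and what survives are the corrections `G(n) − G(n + 2)` at the
vertices `𝔭ⁿ x`.
-/

theorem Summable.tsum_eq_zero_of_tsum_fiber_eq_zero {α β M : Type*} [AddCommGroup M]
    [UniformSpace M] [IsUniformAddGroup M] [CompleteSpace M] [T2Space M] {u : α → M}
    (hu : Summable u) (p : α → β) (h : ∀ b, ∑' a : p ⁻¹' {b}, u a = 0) :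
    ∑' a, u a = 0 :=
  (hu.hasSum.tsum_fiberwise p).unique (by simpa only [h] using hasSum_zero)

theorem Real.rpow_neg_half_mul_rpow_neg_half_mul_zpow {r : ℝ} (hr : 0 < r) (a b : ℤ) :
    r ^ (-(a : ℝ) / 2) * r ^ (-(b : ℝ) / 2) * r ^ b = r ^ (((b - a : ℤ) : ℝ) / 2) := by
  rw [← Real.rpow_intCast, ← Real.rpow_add hr, ← Real.rpow_add hr]
  push_cast
  ring_nf

namespace FlowTree

variable {q : ℕ} (S : FlowTree q)

open ComplexConjugate

theorem level_iterate_pred (x : S.V) (n : ℕ) : S.level (S.pred^[n] x) = S.level x + n := by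
  induction n with
  | zero => simp
  | succ n ih =>
    rw [iterate_succ_apply', S.level_pred, ih]
    push_cast
    ring

theorem iterate_pred_injective (x : S.V) : Injective fun n : ℕ => S.pred^[n] x := by
  intro m n h
  have := congrArg S.level h
  simp only [level_iterate_pred] at this
  omega

theorem dist_iterate_pred (x : S.V) (n : ℕ) : S.dist x (S.pred^[n] x) = n := by
  have hle : S.dist x (S.pred^[n] x) ≤ n := by
    simpa using S.dist_le x (S.pred^[n] x) n 0 (by simp)
  obtain ⟨a, b, hab, hd⟩ := S.dist_spec x (S.pred^[n] x)
  rw [← iterate_add_apply] at hab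
  have := S.iterate_pred_injective x hab
  omega

theorem dist_eq_dist_pred_add_one {x y : S.V} (hy : ∀ n, S.pred^[n] x ≠ y) :
    S.dist x y = S.dist x (S.pred y) + 1 := by
  have hle : S.dist x y ≤ S.dist x (S.pred y) + 1 := by
    have := S.dist_le (S.pred y) y 0 1 rfl
    have := S.dist_triangle x (S.pred y) y
    omega
  obtain ⟨a, b, hab, hd⟩ := S.dist_spec x y
  obtain ⟨b, rfl⟩ : ∃ b', b = b' + 1 := by
    rcases b with _ | b
    · exact absurd hab (hy a)
    · exact ⟨b, rfl⟩
  have := S.dist_le x (S.pred y) a b (by rwa [← iterate_succ_apply])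
  omega

theorem tsum_comp_pred_mul_dist_mul_conj {ε : S.V → ℂ}
    (hε : ∀ z, ∑' y : {y | S.pred y = z}, ε y = 0) (G : ℕ → ℂ) {Φ : S.V → ℂ}
    (hΦ : (support Φ).Finite) (x : S.V) :
    ∑' y, Φ (S.pred y) * G (S.dist x y) * conj (ε y)
      = ∑' n : ℕ, Φ (S.pred^[n + 1] x) * (G n - G (n + 2)) * conj (ε (S.pred^[n] x)) := by
  have hfin : (S.pred ⁻¹' support Φ).Finite := hΦ.preimage' fun z _ => S.succ_finite z
  set A : S.V → ℂ := fun y => Φ (S.pred y) * G (S.dist x (S.pred y) + 1) * conj (ε y)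
  set B : S.V → ℂ := fun y =>
    Φ (S.pred y) * (G (S.dist x y) - G (S.dist x (S.pred y) + 1)) * conj (ε y)
  have hA_summable : Summable A := summable_of_hasFiniteSupport <| hfin.subset fun y hy h => by
    simp [A, h] at hy
  have hB_summable : Summable B := summable_of_hasFiniteSupport <| hfin.subset fun y hy h => by
    simp [B, h] at hy
  have hA_fiber (z : S.V) : ∑' y : S.pred ⁻¹' {z}, A y = 0 := calc
    ∑' y : S.pred ⁻¹' {z}, A y
        = ∑' y : S.pred ⁻¹' {z}, Φ z * G (S.dist x z + 1) * conj (ε y) :=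
      tsum_congr fun y => by simp only [A, show S.pred y = z from y.2]
    _ = Φ z * G (S.dist x z + 1) * conj (∑' y : {y | S.pred y = z}, ε y) := by
      rw [tsum_mul_left, Complex.conj_tsum]; rfl
    _ = 0 := by rw [hε, map_zero, mul_zero]
  have hA : ∑' y, A y = 0 := hA_summable.tsum_eq_zero_of_tsum_fiber_eq_zero S.pred hA_fiber
  have hB : ∑' y, B y = ∑' n, B (S.pred^[n] x) := by
    refine ((S.iterate_pred_injective x).tsum_eq fun y hy => ?_).symm
    by_contra hy_off
    rw [mem_range, not_exists] at hy_off
    simp [B, S.dist_eq_dist_pred_add_one hy_off] at hy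
  calc ∑' y, Φ (S.pred y) * G (S.dist x y) * conj (ε y) = ∑' y, (A y + B y) :=
        tsum_congr fun y => by simp only [A, B]; ring
    _ = ∑' n, B (S.pred^[n] x) := by rw [hA_summable.tsum_add hB_summable, hA, zero_add, hB]
    _ = _ := tsum_congr fun n => by
        simp only [B, ← iterate_succ_apply' S.pred, dist_iterate_pred]

end FlowTree

theorem kernelOp_hgradStar_formula_general {q : ℕ} (hq : 2 ≤ q) (S : FlowTree q)
    (eps : S.V → ℂ)
    (hz : ∀ x : S.V, ∑' y : {y | S.pred y = x}, eps y.1 = 0)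
    (G : ℕ → ℂ) (f : S.V → ℂ) (hf : (Function.support f).Finite) (x : S.V) :
    S.kernelOp G (S.hgradStar eps f) x
      = ∑' n : ℕ, (((q : ℝ) ^ ((n : ℝ)/2) : ℝ) : ℂ) * (G n - G (n + 2)) *
          S.hgradStar eps f (S.pred^[n] x) := by
  have hq_pos : (0 : ℝ) < q := by exact_mod_cast (by omega : 0 < q)
  set Φ : S.V → ℂ := fun z =>
    (((q : ℝ) ^ (((S.level z - 1 - S.level x : ℤ) : ℝ) / 2) : ℝ) : ℂ) * f z
  have hΦ : (support Φ).Finite := hf.subset fun z hΦz hfz => by simp [Φ, hfz] at hΦz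
  calc S.kernelOp G (S.hgradStar eps f) x
        = ∑' y, Φ (S.pred y) * G (S.dist x y) * starRingEnd ℂ (eps y) := tsum_congr fun y => by
          have hweight :=
            Real.rpow_neg_half_mul_rpow_neg_half_mul_zpow hq_pos (S.level x) (S.level y)
          simp only [FlowTree.hgradStar, FlowTree.wR, Φ, S.level_pred, add_sub_cancel_right,
            ← hweight]
          push_cast
          ring
    _ = ∑' n : ℕ,
          Φ (S.pred^[n + 1] x) * (G n - G (n + 2)) * starRingEnd ℂ (eps (S.pred^[n] x)) :=
          S.tsum_comp_pred_mul_dist_mul_conj hz G hΦ x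
    _ = _ := tsum_congr fun n => by
          have hlevel : S.level (S.pred^[n + 1] x) - 1 - S.level x = n := by
            rw [S.level_iterate_pred]
            push_cast
            ring
          simp only [Φ, FlowTree.hgradStar]
          rw [hlevel, Int.cast_natCast, iterate_succ_apply']
          ring

/-- for the integral operator `𝒦` with kernel
`q^{−ℓ(x)/2} G(d(x,y)) q^{−ℓ(y)/2}`,
`𝒦(∇_ε* f)(x) = Σ_{n≥0} q^{n/2}(G(n) − G(n+2)) ∇_ε* f(𝔭ⁿ(x))`. -/
theorem kernelOp_hgradStar_formula {q : ℕ} (hq : 2 ≤ q) (S : FlowTree q)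
    (eps : S.V → ℂ) (hb : ∃ M : ℝ, ∀ x, ‖eps x‖ ≤ M)
    (hz : ∀ x : S.V, ∑' y : {y | S.pred y = x}, eps y.1 = 0)
    (G : ℕ → ℂ) (f : S.V → ℂ) (hf : (Function.support f).Finite) (x : S.V) :
    S.kernelOp G (S.hgradStar eps f) x
      = ∑' n : ℕ, (((q : ℝ) ^ ((n : ℝ)/2) : ℝ) : ℂ) * (G n - G (n + 2)) *
          S.hgradStar eps f (S.pred^[n] x) :=
  kernelOp_hgradStar_formula_general hq S eps hz G f hf x
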